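/- Let $H, K$ be Hilbert spaces, $V : H \to K$ an isometry, $\pi : B \to B(K)$ a unital *-homomorphism from a C*-algebra $B$, and define $\varphi : B \to B(H)$ by $\varphi(x) = V^* \pi(x) V$. Let $P = VV^*$ and let $e \in B$ be such that $\|\varphi(ee^*) - \varphi(e)\varphi(e^*)\| < \delta$ and $\|\varphi(e^*e) - \varphi(e^*)\varphi(e)\| < \delta$ for some $\delta > 0$. Then $\|P\pi(e) - \pi(e)P\| < \sqrt{\delta}$. -/

import Mathlib

/-!
Put `P = VV*`, `Q = 1 - P` and `a = π e`. Then `Pa - aP = PaQ - QaP`, and the two terms map the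
orthogonal pieces `Qh`, `Ph` of a vector `h` into the orthogonal ranges of `P` and `Q`, so
`‖Pa - aP‖ ≤ max ‖QaP‖ ‖Qa*P‖` (note `PaQ = (Qa*P)*`). As `V` is an isometry,
`‖QaP‖² = ‖QaV‖² = ‖V*a*QaV‖ = ‖V*a*aV - V*a*VV*aV‖`, which is exactly the multiplicativity
defect `‖φ(e*e) - φ(e*)φ(e)‖ < δ`; the same computation with `e*` bounds `‖Qa*P‖`.
-/

open ContinuousLinearMap

namespace IsStarProjection

variable {𝕜 E : Type*} [RCLike 𝕜] [NormedAddCommGroup E] [InnerProductSpace 𝕜 E]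
  [CompleteSpace E] {p : E →L[𝕜] E}

theorem inner_apply_one_sub_apply (hp : IsStarProjection p) (x y : E) :
    inner 𝕜 (p x) ((1 - p) y) = 0 := by
  rw [← adjoint_inner_right, ← star_eq_adjoint, hp.isSelfAdjoint.star_eq, ← mul_apply_eq_comp,
    hp.mul_one_sub_self, zero_apply, inner_zero_right]

theorem norm_sq_eq_norm_sq_add_norm_sq (hp : IsStarProjection p) (x : E) :
    ‖x‖ ^ 2 = ‖p x‖ ^ 2 + ‖(1 - p) x‖ ^ 2 := by
  have h := norm_add_sq_eq_norm_sq_add_norm_sq_of_inner_eq_zero _ _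
    (hp.inner_apply_one_sub_apply x x)
  rwa [← add_apply, add_sub_cancel, one_apply_eq_self, ← sq, ← sq, ← sq] at h

theorem norm_mul_sub_mul_le (hp : IsStarProjection p) (a : E →L[𝕜] E) :
    ‖p * a - a * p‖ ≤ max ‖(1 - p) * a * p‖ ‖(1 - p) * star a * p‖ := by
  set M := max ‖(1 - p) * a * p‖ ‖(1 - p) * star a * p‖
  have hM : 0 ≤ M := le_max_of_le_left (norm_nonneg _)
  have hpaq_le : ‖p * a * (1 - p)‖ ≤ M := by
    rw [← norm_star, star_mul, star_mul, hp.isSelfAdjoint.star_eq,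
      hp.one_sub.isSelfAdjoint.star_eq, ← mul_assoc]
    exact le_max_right _ _
  have hsplit : p * a - a * p = p * a * (1 - p) * (1 - p) - (1 - p) * a * p * p := by
    rw [mul_assoc _ (1 - p), mul_assoc _ p p, hp.isIdempotentElem.eq,
      hp.one_sub.isIdempotentElem.eq]
    noncomm_ring
  refine opNorm_le_bound _ hM fun x => ?_
  set u := (p * a * (1 - p)) ((1 - p) x) with hu_def
  set v := ((1 - p) * a * p) (p x) with hv_def
  have hu : ‖u‖ ≤ M * ‖(1 - p) x‖ := (le_opNorm _ _).trans (by gcongr)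
  have hv : ‖v‖ ≤ M * ‖p x‖ := (le_opNorm _ _).trans (by gcongr; exact le_max_left _ _)
  have horth : inner 𝕜 u (-v) = 0 := by
    rw [inner_neg_right, hu_def, hv_def, mul_assoc, mul_assoc, mul_apply_eq_comp p,
      mul_apply_eq_comp (1 - p), hp.inner_apply_one_sub_apply, neg_zero]
  have hpyth : ‖u - v‖ ^ 2 = ‖u‖ ^ 2 + ‖v‖ ^ 2 := by
    rw [sub_eq_add_neg, ← norm_neg v, sq, sq, sq]
    exact norm_add_sq_eq_norm_sq_add_norm_sq_of_inner_eq_zero _ _ horth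
  rw [← sq_le_sq₀ (norm_nonneg _) (by positivity), hsplit, sub_apply,
    mul_apply_eq_comp (p * a * (1 - p)), mul_apply_eq_comp ((1 - p) * a * p), hpyth, mul_pow,
    hp.norm_sq_eq_norm_sq_add_norm_sq x]
  nlinarith [pow_le_pow_left₀ (norm_nonneg _) hu 2, pow_le_pow_left₀ (norm_nonneg _) hv 2]

end IsStarProjection

namespace ContinuousLinearMap

variable {𝕜 H K F : Type*} [RCLike 𝕜] [NormedAddCommGroup H] [InnerProductSpace 𝕜 H]
  [CompleteSpace H] [NormedAddCommGroup K] [InnerProductSpace 𝕜 K] [CompleteSpace K]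
  [NormedAddCommGroup F] [InnerProductSpace 𝕜 F] [CompleteSpace F] {V : H →L[𝕜] K}

theorem isStarProjection_comp_adjoint_of_norm_map (hV : ∀ x, ‖V x‖ = ‖x‖) :
    IsStarProjection (V ∘L adjoint V) where
  isIdempotentElem := by
    rw [IsIdempotentElem, mul_def, comp_assoc, ← comp_assoc _ V,
      (norm_map_iff_adjoint_comp_self V).mp hV, one_def, id_comp]
  isSelfAdjoint := by rw [IsSelfAdjoint, star_eq_adjoint, adjoint_comp, adjoint_adjoint]

theorem norm_comp_adjoint_of_norm_map (hV : ∀ x, ‖V x‖ = ‖x‖) (X : H →L[𝕜] F) :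
    ‖X ∘L adjoint V‖ = ‖X‖ := by
  rw [← adjoint.norm_map, adjoint_comp, adjoint_adjoint, ← adjoint.norm_map X]
  exact (⟨V.toLinearMap, hV⟩ : H →ₗᵢ[𝕜] K).norm_toContinuousLinearMap_comp

theorem norm_sq_one_sub_mul_mul_comp_adjoint (hV : ∀ x, ‖V x‖ = ‖x‖) (a : K →L[𝕜] K) :
    ‖(1 - V ∘L adjoint V) * a * (V ∘L adjoint V)‖ ^ 2 =
      ‖adjoint V ∘L (star a * a) ∘L V - (adjoint V ∘L star a ∘L V) * (adjoint V ∘L a ∘L V)‖ := by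
  have hQ := (isStarProjection_comp_adjoint_of_norm_map hV).one_sub
  set X := ((1 - V ∘L adjoint V) * a) ∘L V with hX
  calc _ = ‖X‖ ^ 2 := by rw [← norm_comp_adjoint_of_norm_map hV]; rfl
    _ = ‖adjoint X ∘L X‖ := by rw [norm_adjoint_comp_self, sq]
    _ = ‖adjoint V ∘L (star ((1 - V ∘L adjoint V) * a) * ((1 - V ∘L adjoint V) * a)) ∘L V‖ := by
      rw [hX, adjoint_comp, ← star_eq_adjoint]
      rfl
    _ = ‖adjoint V ∘L (star a * (1 - V ∘L adjoint V) * a) ∘L V‖ := by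
      rw [star_mul, hQ.isSelfAdjoint.star_eq, mul_assoc, ← mul_assoc (1 - V ∘L adjoint V),
        hQ.isIdempotentElem.eq, ← mul_assoc]
    _ = _ := by
      rw [mul_sub, sub_mul, mul_one, sub_comp, comp_sub]
      rfl

end ContinuousLinearMap

open ContinuousLinearMap in
theorem stinespring_projection_almost_commutes_general
    {H K : Type*} [NormedAddCommGroup H] [InnerProductSpace ℂ H] [CompleteSpace H]
    [NormedAddCommGroup K] [InnerProductSpace ℂ K] [CompleteSpace K]
    {B : Type*} [NormedRing B] [StarRing B] [NormedAlgebra ℂ B]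
    (V : H →L[ℂ] K) (hV : ∀ h : H, ‖V h‖ = ‖h‖)
    (π : B →⋆ₐ[ℂ] (K →L[ℂ] K))
    (φ : B → (H →L[ℂ] H))
    (hφ : ∀ x : B, φ x = (ContinuousLinearMap.adjoint V).comp ((π x).comp V))
    (e : B) (δ : ℝ)
    (h1 : ‖φ (e * star e) - φ e * φ (star e)‖ < δ)
    (h2 : ‖φ (star e * e) - φ (star e) * φ e‖ < δ) :
    ‖(V.comp (ContinuousLinearMap.adjoint V)) * π e
        - π e * (V.comp (ContinuousLinearMap.adjoint V))‖ < Real.sqrt δ := by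
  have hdefect (x : B) : ‖(1 - V ∘L adjoint V) * π x * (V ∘L adjoint V)‖ ^ 2 =
      ‖φ (star x * x) - φ (star x) * φ x‖ := by
    rw [norm_sq_one_sub_mul_mul_comp_adjoint hV, hφ, hφ, hφ, map_mul, map_star]
  refine ((isStarProjection_comp_adjoint_of_norm_map hV).norm_mul_sub_mul_le (π e)).trans_lt
    (max_lt ((Real.lt_sqrt (norm_nonneg _)).2 ?_) ((Real.lt_sqrt (norm_nonneg _)).2 ?_))
  · rwa [hdefect]
  · rwa [← map_star, hdefect, star_star]

open ContinuousLinearMap in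
/-- Stinespring-type estimate: if `φ(x) = V* π(x) V` for an isometry `V` and a unital
*-homomorphism `π`, and `φ` is approximately multiplicative at `e` and `e*` within `δ`, then
the Stinespring projection `P = V V*` almost commutes with `π(e)`: `‖Pπ(e) - π(e)P‖ < √δ`. -/
theorem stinespring_projection_almost_commutes
    {H K : Type*} [NormedAddCommGroup H] [InnerProductSpace ℂ H] [CompleteSpace H]
    [NormedAddCommGroup K] [InnerProductSpace ℂ K] [CompleteSpace K]
    {B : Type*} [NormedRing B] [StarRing B] [CStarRing B] [NormedAlgebra ℂ B]
    (V : H →L[ℂ] K) (hV : ∀ h : H, ‖V h‖ = ‖h‖)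
    (π : B →⋆ₐ[ℂ] (K →L[ℂ] K))
    (φ : B → (H →L[ℂ] H))
    (hφ : ∀ x : B, φ x = (ContinuousLinearMap.adjoint V).comp ((π x).comp V))
    (e : B) (δ : ℝ) (hδ : 0 < δ)
    (h1 : ‖φ (e * star e) - φ e * φ (star e)‖ < δ)
    (h2 : ‖φ (star e * e) - φ (star e) * φ e‖ < δ) :
    ‖(V.comp (ContinuousLinearMap.adjoint V)) * π e
        - π e * (V.comp (ContinuousLinearMap.adjoint V))‖ < Real.sqrt δ :=
  stinespring_projection_almost_commutes_general V hV π φ hφ e δ h1 h2
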